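/- Let G be a graph with a vertex v of degree three with neighbors a, b, c. For S a subset of {a,b,c}, let G_S denote the graph obtained by subdividing each edge from v to a vertex in S. Then LO_k(G) = LO_k(G_{ab}) + LO_k(G_{ac}) + LO_k(G_{bc}) − 2·LO_k(G_{abc}). -/

import Mathlib

/-!
In a locally-optimal colouring of `subdiv G u w` the new vertex, `u` and `w` all get the same
colour: the new vertex has degree two, so a neighbour of another colour would leave it at most
one neighbour of its own colour, not a strict plurality. Conversely, colouring the new vertex like
`u` keeps every neighbour count of `G`, since it replaces the edge `uw` whose ends already have that
colour. So `LO_k(G_S)` counts the locally-optimal colourings of `G` in which every vertex of `S`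
has the colour of `v`.

At `v` local optimality forces at least two of `a, b, c` to share the colour of `v`, so the
colourings of `G` are covered by the three sets for `S = ab, ac, bc`, any two of which meet in the
set for `S = abc`; inclusion-exclusion gives the identity.
-/

/-- A locally-optimal `k`-coloring: each vertex's own color appears strictly
more often among its neighbors than any other color (plurality). -/
def IsLocOpt {V : Type*} {k : ℕ} (G : SimpleGraph V) (c : V → Fin k) : Prop :=
  ∀ v : V, ∀ d : Fin k, d ≠ c v →
    Nat.card {w : V // G.Adj v w ∧ c w = d} < Nat.card {w : V // G.Adj v w ∧ c w = c v}

/-- The number of locally-optimal `k`-colorings of `G`. -/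
noncomputable def LOcount {V : Type*} (G : SimpleGraph V) (k : ℕ) : ℕ :=
  Nat.card {c : V → Fin k // IsLocOpt G c}

/-- The graph obtained from `G` by subdividing the edge `uw`. -/
def subdiv {V : Type*} (G : SimpleGraph V) (u w : V) : SimpleGraph (V ⊕ Unit) :=
  SimpleGraph.fromRel fun x y =>
    match x, y with
    | Sum.inl a, Sum.inl b => G.Adj a b ∧ ¬((a = u ∧ b = w) ∨ (a = w ∧ b = u))
    | Sum.inl a, Sum.inr _ => a = u ∨ a = w
    | Sum.inr _, _ => False

open Sum

section

variable {V : Type*} {k : ℕ}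

lemma IsLocOpt.exists_adj_pair_of_adj_ne [Finite V] {G : SimpleGraph V}
    {c : V → Fin k} (hc : IsLocOpt G c) {v y : V} (hy : G.Adj v y) (hne : c y ≠ c v) :
    ∃ w₁ w₂, w₁ ≠ w₂ ∧ G.Adj v w₁ ∧ G.Adj v w₂ ∧ c w₁ = c v ∧ c w₂ = c v := by
  have hpos : 0 < Nat.card {w // G.Adj v w ∧ c w = c y} :=
    Nat.card_pos_iff.mpr ⟨⟨y, hy, rfl⟩, inferInstance⟩
  have : Nontrivial {w // G.Adj v w ∧ c w = c v} :=
    Finite.one_lt_card_iff_nontrivial.mp (by have := hc v (c y) hne; omega)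
  obtain ⟨⟨w₁, h₁⟩, ⟨w₂, h₂⟩, hw⟩ := exists_pair_ne {w // G.Adj v w ∧ c w = c v}
  exact ⟨w₁, w₂, fun e => hw (Subtype.ext e), h₁.1, h₂.1, h₁.2, h₂.2⟩

section Subdivision

variable {G : SimpleGraph V} {u w : V}

@[simp]
lemma subdiv_adj_inl_inl {x y : V} :
    (subdiv G u w).Adj (inl x) (inl y) ↔ G.Adj x y ∧ s(x, y) ≠ s(u, w) := by
  simp only [subdiv, SimpleGraph.fromRel_adj, ne_eq, inl.injEq, Sym2.eq_iff]
  constructor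
  · rintro ⟨-, h | ⟨h, hne⟩⟩
    · exact h
    · exact ⟨h.symm, by tauto⟩
  · rintro ⟨h, hne⟩
    exact ⟨h.ne, Or.inl ⟨h, hne⟩⟩

@[simp]
lemma subdiv_adj_inl_inr {x : V} {t : Unit} :
    (subdiv G u w).Adj (inl x) (inr t) ↔ x = u ∨ x = w := by
  simp [subdiv]

@[simp]
lemma subdiv_adj_inr_inl {x : V} {t : Unit} :
    (subdiv G u w).Adj (inr t) (inl x) ↔ x = u ∨ x = w := by
  simp [subdiv]

@[simp]
lemma not_subdiv_adj_inr_inr {t t' : Unit} : ¬ (subdiv G u w).Adj (inr t) (inr t') := by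
  simp [subdiv]

lemma subdiv_adj_inl_of_adj_of_ne {v p q : V} (hp : G.Adj v p) (hq : G.Adj v q) (hpq : p ≠ q) :
    (subdiv G v p).Adj (inl v) (inl q) := by
  simp [hq, hpq.symm, hp.ne]

lemma bijOn_subdiv_adj_inl [DecidableEq V] (h : G.Adj u w) {f : V → Fin k} (hf : f w = f u)
    (x : V) (d : Fin k) :
    Set.BijOn (fun y => if s(x, y) = s(u, w) then inr () else inl y)
      {y | G.Adj x y ∧ f y = d}
      {z | (subdiv G u w).Adj (inl x) z ∧ Sum.elim f (fun _ => f u) z = d} := by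
  refine ⟨?_, ?_, ?_⟩
  · rintro y ⟨hxy, rfl⟩
    dsimp only
    split_ifs with he
    · rcases Sym2.eq_iff.mp he with ⟨rfl, rfl⟩ | ⟨rfl, rfl⟩ <;> simp [hf]
    · simp [hxy, he]
  · intro y₁ _ y₂ _ he
    dsimp only at he
    split_ifs at he with h₁ h₂ h₂
    · exact Sym2.congr_right.mp (h₁.trans h₂.symm)
    · exact inl_injective he
  · rintro (y | t) ⟨hxy, rfl⟩
    · rw [subdiv_adj_inl_inl] at hxy
      exact ⟨y, ⟨hxy.1, rfl⟩, by simp [hxy.2]⟩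
    · rcases subdiv_adj_inl_inr.mp hxy with rfl | rfl
      · exact ⟨w, ⟨h, hf⟩, by simp⟩
      · exact ⟨u, ⟨h.symm, rfl⟩, by simp [Sym2.eq_swap]⟩

lemma card_subdiv_adj_inl (h : G.Adj u w) {f : V → Fin k} (hf : f w = f u) (x : V) (d : Fin k) :
    Nat.card {y // G.Adj x y ∧ f y = d} =
      Nat.card {z // (subdiv G u w).Adj (inl x) z ∧ Sum.elim f (fun _ => f u) z = d} := by
  classical
  exact Nat.card_congr ((bijOn_subdiv_adj_inl h hf x d).equiv _)

lemma isLocOpt_subdiv_elim_iff [Finite V] (h : G.Adj u w) {f : V → Fin k} (hf : f w = f u) :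
    IsLocOpt (subdiv G u w) (Sum.elim f fun _ => f u) ↔ IsLocOpt G f := by
  constructor
  · intro hlo x d hd
    simpa only [elim_inl, card_subdiv_adj_inl h hf] using hlo (inl x) d hd
  · rintro hlo (x | t) d hd
    · simpa only [elim_inl, ← card_subdiv_adj_inl h hf] using hlo x d hd
    · cases t
      have : IsEmpty {z // (subdiv G u w).Adj (inr ()) z ∧ Sum.elim f (fun _ => f u) z = d} := by
        constructor
        rintro ⟨(z | ⟨⟩), hz, rfl⟩
        · rcases subdiv_adj_inr_inl.mp hz with rfl | rfl
          exacts [hd rfl, hd hf]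
        · exact not_subdiv_adj_inr_inr hz
      rw [Nat.card_of_isEmpty]
      exact Nat.card_pos_iff.mpr ⟨⟨inl u, by simp, rfl⟩, inferInstance⟩

variable [Finite V]

lemma IsLocOpt.subdiv_inl_eq_inr {c : V ⊕ Unit → Fin k} (hc : IsLocOpt (subdiv G u w) c) :
    c (inl u) = c (inr ()) ∧ c (inl w) = c (inr ()) := by
  by_contra hne
  obtain ⟨y, hy, hy'⟩ : ∃ y, (subdiv G u w).Adj (inr ()) y ∧ c y ≠ c (inr ()) := by
    rcases not_and_or.mp hne with h | h
    exacts [⟨inl u, by simp, h⟩, ⟨inl w, by simp, h⟩]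
  obtain ⟨w₁, w₂, hw, h₁, h₂, e₁, e₂⟩ := hc.exists_adj_pair_of_adj_ne hy hy'
  rcases w₁ with w₁ | ⟨⟩ <;> rcases w₂ with w₂ | ⟨⟩ <;>
    simp only [subdiv_adj_inr_inl, not_subdiv_adj_inr_inr] at h₁ h₂
  rcases h₁ with rfl | rfl <;> rcases h₂ with rfl | rfl <;> tauto

lemma IsLocOpt.subdiv_eq_elim {c : V ⊕ Unit → Fin k} (hc : IsLocOpt (subdiv G u w) c) :
    c = Sum.elim (c ∘ inl) fun _ => c (inl u) := by
  funext z
  rcases z with z | ⟨⟩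
  · rfl
  · exact hc.subdiv_inl_eq_inr.1.symm

lemma IsLocOpt.comp_inl (h : G.Adj u w) {c : V ⊕ Unit → Fin k}
    (hc : IsLocOpt (subdiv G u w) c) : IsLocOpt G (c ∘ inl) ∧ c (inl w) = c (inl u) := by
  have hcw : c (inl w) = c (inl u) := hc.subdiv_inl_eq_inr.2.trans hc.subdiv_inl_eq_inr.1.symm
  refine ⟨(isLocOpt_subdiv_elim_iff h hcw).mp ?_, hcw⟩
  convert hc
  exact hc.subdiv_eq_elim.symm

lemma card_isLocOpt_subdiv_and (h : G.Adj u w) (P : (V → Fin k) → Prop) :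
    Nat.card {c // IsLocOpt (subdiv G u w) c ∧ P (c ∘ inl)} =
      Nat.card {f // IsLocOpt G f ∧ f w = f u ∧ P f} :=
  Nat.card_congr
    { toFun c := ⟨c.1 ∘ inl, (c.2.1.comp_inl h).1, (c.2.1.comp_inl h).2, c.2.2⟩
      invFun f := ⟨Sum.elim f.1 fun _ => f.1 u, (isLocOpt_subdiv_elim_iff h f.2.2.1).mpr f.2.1,
        by simpa only [elim_comp_inl] using f.2.2.2⟩
      left_inv c := Subtype.ext c.2.1.subdiv_eq_elim.symm
      right_inv f := rfl }

lemma LOcount_subdiv (h : G.Adj u w) :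
    LOcount (subdiv G u w) k = Nat.card {f : V → Fin k // IsLocOpt G f ∧ f w = f u} := by
  simpa [LOcount] using card_isLocOpt_subdiv_and (k := k) h fun _ => True

variable {v p q r : V}

lemma LOcount_subdiv_subdiv (hp : G.Adj v p) (hq : G.Adj v q) (hpq : p ≠ q) :
    LOcount (subdiv (subdiv G v p) (inl v) (inl q)) k =
      {f : V → Fin k | IsLocOpt G f ∧ f p = f v ∧ f q = f v}.ncard := by
  rw [LOcount_subdiv (subdiv_adj_inl_of_adj_of_ne hp hq hpq)]
  exact card_isLocOpt_subdiv_and hp fun f => f q = f v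

lemma LOcount_subdiv_subdiv_subdiv (hp : G.Adj v p) (hq : G.Adj v q) (hr : G.Adj v r)
    (hpq : p ≠ q) (hpr : p ≠ r) (hqr : q ≠ r) :
    LOcount (subdiv (subdiv (subdiv G v p) (inl v) (inl q)) (inl (inl v)) (inl (inl r))) k =
      {f : V → Fin k | IsLocOpt G f ∧ f p = f v ∧ f q = f v ∧ f r = f v}.ncard := by
  have hvq := subdiv_adj_inl_of_adj_of_ne hp hq hpq
  have hvr := subdiv_adj_inl_of_adj_of_ne hp hr hpr
  rw [LOcount_subdiv (subdiv_adj_inl_of_adj_of_ne hvq hvr (inl_injective.ne hqr))]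
  exact (card_isLocOpt_subdiv_and hvq fun f => f (inl r) = f (inl v)).trans
    (card_isLocOpt_subdiv_and hp fun f => f q = f v ∧ f r = f v)

end Subdivision

lemma LOcount_eq_ncard (G : SimpleGraph V) (k : ℕ) :
    LOcount G k = {f : V → Fin k | IsLocOpt G f}.ncard :=
  Nat.card_coe_set_eq _

lemma SimpleGraph.neighborSet_eq_of_card_eq_three [Finite V] {G : SimpleGraph V}
    {v a b c : V} (hdeg : Nat.card {w // G.Adj v w} = 3) (hab : a ≠ b) (hac : a ≠ c) (hbc : b ≠ c)
    (ha : G.Adj v a) (hb : G.Adj v b) (hc : G.Adj v c) :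
    G.neighborSet v = {a, b, c} := by
  refine (Set.eq_of_subset_of_ncard_le ?_ ?_).symm
  · rintro w (rfl | rfl | rfl) <;> assumption
  · rw [Set.ncard_eq_three.mpr ⟨a, b, c, hab, hac, hbc, rfl⟩, ← Nat.card_coe_set_eq]
    exact hdeg.le

lemma IsLocOpt.two_of_three_adj_eq [Finite V] {G : SimpleGraph V} {f : V → Fin k}
    {v a b c : V} (hf : IsLocOpt G f) (hN : G.neighborSet v = {a, b, c}) :
    (f a = f v ∧ f b = f v) ∨ (f a = f v ∧ f c = f v) ∨ (f b = f v ∧ f c = f v) := by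
  have hadj : ∀ w, G.Adj v w ↔ w = a ∨ w = b ∨ w = c := fun w => by
    rw [← G.mem_neighborSet, hN]; rfl
  by_cases hab : f a = f v ∧ f b = f v
  · exact Or.inl hab
  obtain ⟨y, hy, hy'⟩ : ∃ y, G.Adj v y ∧ f y ≠ f v := by
    rcases not_and_or.mp hab with h | h
    exacts [⟨a, (hadj a).mpr (by simp), h⟩, ⟨b, (hadj b).mpr (by simp), h⟩]
  obtain ⟨w₁, w₂, hw, h₁, h₂, e₁, e₂⟩ := hf.exists_adj_pair_of_adj_ne hy hy'
  rcases (hadj w₁).mp h₁ with rfl | rfl | rfl <;> rcases (hadj w₂).mp h₂ with rfl | rfl | rfl <;>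
    tauto

lemma setOf_isLocOpt_eq_union [Finite V] {G : SimpleGraph V} {v a b c : V}
    (hN : G.neighborSet v = {a, b, c}) :
    {f : V → Fin k | IsLocOpt G f} =
      {f | IsLocOpt G f ∧ f a = f v ∧ f b = f v} ∪ {f | IsLocOpt G f ∧ f a = f v ∧ f c = f v} ∪
        {f | IsLocOpt G f ∧ f b = f v ∧ f c = f v} := by
  ext f
  simp only [Set.mem_union, Set.mem_ofPred_eq]
  constructor
  · intro hf
    rcases hf.two_of_three_adj_eq hN with h | h | h <;> tauto
  · rintro ((⟨hf, -⟩ | ⟨hf, -⟩) | ⟨hf, -⟩) <;> exact hf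

lemma Set.ncard_union_union_add_two_mul_of_inter_eq {α : Type*} [Finite α] {A B C T : Set α}
    (hAB : A ∩ B = T) (hAC : A ∩ C = T) (hBC : B ∩ C = T) :
    (A ∪ B ∪ C).ncard + 2 * T.ncard = A.ncard + B.ncard + C.ncard := by
  have hunion := Set.ncard_union_add_ncard_inter A B
  have hunion' := Set.ncard_union_add_ncard_inter (A ∪ B) C
  rw [hAB] at hunion
  rw [Set.union_inter_distrib_right, hAC, hBC, Set.union_self] at hunion'
  omega

end

/-- The trivalent recurrence: if `v` has degree three with neighbors `a,b,c`,
then `LO_k(G) = LO_k(G_ab) + LO_k(G_ac) + LO_k(G_bc) - 2 LO_k(G_abc)`, where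
`G_S` is obtained by subdividing the edges from `v` to `S`. (Stated additively
to avoid truncated subtraction.) -/
theorem stmt7 {V : Type*} [Fintype V] (G : SimpleGraph V) (k : ℕ) (v a b c : V)
    (hab : a ≠ b) (hac : a ≠ c) (hbc : b ≠ c)
    (ha : G.Adj v a) (hb : G.Adj v b) (hc : G.Adj v c)
    (hdeg : Nat.card {w : V // G.Adj v w} = 3) :
    LOcount G k
      + 2 * LOcount (subdiv (subdiv (subdiv G v a) (Sum.inl v) (Sum.inl b))
          (Sum.inl (Sum.inl v)) (Sum.inl (Sum.inl c))) k
      = LOcount (subdiv (subdiv G v a) (Sum.inl v) (Sum.inl b)) k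
        + LOcount (subdiv (subdiv G v a) (Sum.inl v) (Sum.inl c)) k
        + LOcount (subdiv (subdiv G v b) (Sum.inl v) (Sum.inl c)) k := by
  have hN := G.neighborSet_eq_of_card_eq_three hdeg hab hac hbc ha hb hc
  rw [LOcount_eq_ncard, setOf_isLocOpt_eq_union hN, LOcount_subdiv_subdiv ha hb hab,
    LOcount_subdiv_subdiv ha hc hac, LOcount_subdiv_subdiv hb hc hbc,
    LOcount_subdiv_subdiv_subdiv ha hb hc hab hac hbc]
  refine Set.ncard_union_union_add_two_mul_of_inter_eq ?_ ?_ ?_ <;> ext f <;>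
    simp only [Set.mem_inter_iff, Set.mem_ofPred_eq] <;> tauto
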